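/- arXiv:2302.01460 — 6 statements merged into one kernel-verified Lean document; each statement's English description precedes it below -/
import Mathlib

section
/- Let E be a complex Banach space, ψ ∈ E* a nonzero continuous functional, and e ∈ E with ψ(e) ≠ 0 and ‖e‖ = 1. Define a product on E by ab = ψ(b)x + ψ(a)y + ψ(a)ψ(b)e, where a = x + ψ(a)e and b = y + ψ(b)e with x, y ∈ ker ψ (after rescaling so ψ(e)=1). Then this product makes E a commutative algebra with identity e, and the norm ‖a‖₁ = |ψ(a)| + ‖x‖ is an algebra norm (submultiplicative) equivalent to the original norm on E. -/
/-!
Writing `a = x + ψ(a) e` with `x ∈ ker ψ` identifies `E` with `ℂ × ker ψ`, and the product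
becomes `(λ, x) (μ, y) = (λ μ, λ y + μ x)`: the trivial square-zero extension of `ℂ` by
`ker ψ`. So `ψ` is multiplicative, the algebra laws reduce to identities in the module `E`,
and `‖a‖₁` is the `ℓ¹`-norm of the pair, which is submultiplicative because `x y = 0` drops out.
-/

section Algebra

variable {R E : Type*} [CommRing R] [AddCommGroup E] [Module R E]

def sqZeroMul (ψ : E →ₗ[R] R) (e a b : E) : E :=
  ψ b • a + ψ a • b - (ψ a * ψ b) • e

variable (ψ : E →ₗ[R] R) (e : E)

theorem sqZeroMul_eq_decomposition (a b : E) :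
    sqZeroMul ψ e a b = ψ b • (a - ψ a • e) + ψ a • (b - ψ b • e) + (ψ a * ψ b) • e := by
  unfold sqZeroMul; module

theorem sqZeroMul_sub_smul (a b : E) :
    sqZeroMul ψ e a b - (ψ a * ψ b) • e = ψ b • (a - ψ a • e) + ψ a • (b - ψ b • e) := by
  rw [sqZeroMul_eq_decomposition, add_sub_cancel_right]

theorem map_sqZeroMul (hψe : ψ e = 1) (a b : E) : ψ (sqZeroMul ψ e a b) = ψ a * ψ b := by
  simp only [sqZeroMul, map_sub, map_add, map_smul, hψe, smul_eq_mul]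
  ring

theorem sqZeroMul_comm (a b : E) : sqZeroMul ψ e a b = sqZeroMul ψ e b a := by
  unfold sqZeroMul; module

theorem sqZeroMul_assoc (hψe : ψ e = 1) (a b c : E) :
    sqZeroMul ψ e (sqZeroMul ψ e a b) c = sqZeroMul ψ e a (sqZeroMul ψ e b c) := by
  have hab := map_sqZeroMul ψ e hψe a b
  have hbc := map_sqZeroMul ψ e hψe b c
  unfold sqZeroMul at *
  rw [hab, hbc]
  module

theorem sqZeroMul_right_eq_self (hψe : ψ e = 1) (a : E) : sqZeroMul ψ e a e = a := by
  rw [sqZeroMul, hψe]; module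

theorem sqZeroMul_add_left (a b c : E) :
    sqZeroMul ψ e (a + b) c = sqZeroMul ψ e a c + sqZeroMul ψ e b c := by
  simp only [sqZeroMul, map_add]; module

theorem sqZeroMul_smul_left (s : R) (a b : E) :
    sqZeroMul ψ e (s • a) b = s • sqZeroMul ψ e a b := by
  simp only [sqZeroMul, map_smul, smul_eq_mul]; module

end Algebra

section Norm

variable {𝕜 E : Type*} [NormedField 𝕜] [NormedAddCommGroup E] [NormedSpace 𝕜 E]

def sqZeroNorm (ψ : E →ₗ[𝕜] 𝕜) (e a : E) : ℝ :=
  ‖ψ a‖ + ‖a - ψ a • e‖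

theorem sqZeroNorm_sqZeroMul_le (ψ : E →ₗ[𝕜] 𝕜) (e : E) (hψe : ψ e = 1) (a b : E) :
    sqZeroNorm ψ e (sqZeroMul ψ e a b) ≤ sqZeroNorm ψ e a * sqZeroNorm ψ e b := by
  have hker : ‖sqZeroMul ψ e a b - (ψ a * ψ b) • e‖ ≤
      ‖ψ b‖ * ‖a - ψ a • e‖ + ‖ψ a‖ * ‖b - ψ b • e‖ := by
    rw [sqZeroMul_sub_smul, ← norm_smul, ← norm_smul]
    exact norm_add_le _ _
  have hxy : 0 ≤ ‖a - ψ a • e‖ * ‖b - ψ b • e‖ := by positivity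
  rw [sqZeroNorm, sqZeroNorm, sqZeroNorm, map_sqZeroMul ψ e hψe, norm_mul]
  nlinarith

theorem norm_le_sqZeroNorm (ψ : E →ₗ[𝕜] 𝕜) {e : E} (he : ‖e‖ = 1) (a : E) :
    ‖a‖ ≤ sqZeroNorm ψ e a :=
  calc ‖a‖ = ‖(a - ψ a • e) + ψ a • e‖ := by rw [sub_add_cancel]
    _ ≤ ‖a - ψ a • e‖ + ‖ψ a • e‖ := norm_add_le _ _
    _ = sqZeroNorm ψ e a := by rw [norm_smul, he, mul_one, sqZeroNorm, add_comm]

end Norm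

theorem sqZeroNorm_le {𝕜 E : Type*} [NontriviallyNormedField 𝕜] [NormedAddCommGroup E]
    [NormedSpace 𝕜 E] (ψ : E →L[𝕜] 𝕜) (e a : E) :
    sqZeroNorm (ψ : E →ₗ[𝕜] 𝕜) e a ≤ (1 + ‖ψ‖ + ‖ψ‖ * ‖e‖) * ‖a‖ := by
  have hψa : ‖ψ a‖ ≤ ‖ψ‖ * ‖a‖ := ψ.le_opNorm a
  have hx : ‖a - ψ a • e‖ ≤ ‖a‖ + ‖ψ‖ * ‖a‖ * ‖e‖ :=
    calc ‖a - ψ a • e‖ ≤ ‖a‖ + ‖ψ a‖ * ‖e‖ := by rw [← norm_smul]; exact norm_sub_le _ _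
      _ ≤ ‖a‖ + ‖ψ‖ * ‖a‖ * ‖e‖ := by gcongr
  change ‖ψ a‖ + ‖a - ψ a • e‖ ≤ _
  linarith

theorem banach_space_becomes_algebra_general
    (E : Type*) [NormedAddCommGroup E] [NormedSpace ℂ E]
    (ψ : E →L[ℂ] ℂ) (e : E) (hψe : ψ e = 1) (he : ‖e‖ = 1) :
    ∀ mul : E → E → E,
      (∀ a b : E, mul a b =
        ψ b • (a - ψ a • e) + ψ a • (b - ψ b • e) + (ψ a * ψ b) • e) →
      ∀ nrm : E → ℝ,
      (∀ a : E, nrm a = ‖ψ a‖ + ‖a - ψ a • e‖) →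
      (∀ a b, mul a b = mul b a) ∧
      (∀ a b c, mul (mul a b) c = mul a (mul b c)) ∧
      (∀ a, mul a e = a) ∧
      (∀ a b c, mul (a + b) c = mul a c + mul b c) ∧
      (∀ (s : ℂ) (a b), mul (s • a) b = s • mul a b) ∧
      (∀ a b, nrm (mul a b) ≤ nrm a * nrm b) ∧
      (∃ C₁ > (0 : ℝ), ∃ C₂ > (0 : ℝ),
        ∀ a, C₁ * ‖a‖ ≤ nrm a ∧ nrm a ≤ C₂ * ‖a‖) := by
  intro mul hmul nrm hnrm
  set φ : E →ₗ[ℂ] ℂ := ψ.toLinearMap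
  have hφe : φ e = 1 := hψe
  obtain rfl : mul = sqZeroMul φ e :=
    funext₂ fun a b => (hmul a b).trans (sqZeroMul_eq_decomposition φ e a b).symm
  obtain rfl : nrm = sqZeroNorm φ e := funext hnrm
  refine ⟨sqZeroMul_comm φ e, sqZeroMul_assoc φ e hφe, sqZeroMul_right_eq_self φ e hφe,
    sqZeroMul_add_left φ e, sqZeroMul_smul_left φ e, sqZeroNorm_sqZeroMul_le φ e hφe,
    1, one_pos, 1 + ‖ψ‖ + ‖ψ‖ * ‖e‖, by positivity, fun a => ⟨?_, sqZeroNorm_le ψ e a⟩⟩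
  rw [one_mul]
  exact norm_le_sqZeroNorm φ he a

/-- A complex Banach space `E` becomes a commutative unital algebra: given
`ψ ∈ E*` with `ψ(e) = 1`, `‖e‖ = 1`, the product
`a * b = ψ(b)x + ψ(a)y + ψ(a)ψ(b)e` (where `a = x + ψ(a)e`, `b = y + ψ(b)e`,
`x, y ∈ ker ψ`) is commutative, associative, bilinear, has identity `e`, and the
norm `‖a‖₁ = |ψ(a)| + ‖x‖` is submultiplicative and equivalent to the norm of `E`. -/
theorem banach_space_becomes_algebra
    (E : Type*) [NormedAddCommGroup E] [NormedSpace ℂ E] [CompleteSpace E]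
    (ψ : E →L[ℂ] ℂ) (hψ : ψ ≠ 0) (e : E) (hψe : ψ e = 1) (he : ‖e‖ = 1) :
    ∀ mul : E → E → E,
      (∀ a b : E, mul a b =
        ψ b • (a - ψ a • e) + ψ a • (b - ψ b • e) + (ψ a * ψ b) • e) →
      ∀ nrm : E → ℝ,
      (∀ a : E, nrm a = ‖ψ a‖ + ‖a - ψ a • e‖) →
      (∀ a b, mul a b = mul b a) ∧
      (∀ a b c, mul (mul a b) c = mul a (mul b c)) ∧
      (∀ a, mul a e = a) ∧
      (∀ a b c, mul (a + b) c = mul a c + mul b c) ∧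
      (∀ (s : ℂ) (a b), mul (s • a) b = s • mul a b) ∧
      (∀ a b, nrm (mul a b) ≤ nrm a * nrm b) ∧
      (∃ C₁ > (0 : ℝ), ∃ C₂ > (0 : ℝ),
        ∀ a, C₁ * ‖a‖ ≤ nrm a ∧ nrm a ≤ C₂ * ‖a‖) :=
  banach_space_becomes_algebra_general E ψ e hψe he
end

section
/- Let E be a Banach space, A a commutative unital Banach algebra, and K ⊆ E compact. The closure 𝑷(K,A) in C(K,A) of restrictions to K of polynomials generated by linear operators E → A is closed under multiplication, i.e., it is a closed subalgebra of C(K,A). -/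
/-- `P : E → A` is a polynomial generated by bounded linear operators:
`P = P₀ + P₁ + ⋯ + P_N` where `P₀` is constant and each
`P_k(x) = ∑ᵢ (T_{k,i} x)^k` with `∑ᵢ ‖T_{k,i}‖^k < ∞`. -/
def IsOpGenPoly {E A : Type*} [NormedAddCommGroup E] [NormedSpace ℂ E]
    [NormedRing A] [NormedAlgebra ℂ A] (P : E → A) : Prop :=
  ∃ (N : ℕ) (c : A) (T : ℕ → ℕ → E →L[ℂ] A),
    (∀ k, 1 ≤ k → k ≤ N → Summable fun i => ‖T k i‖ ^ k) ∧
    ∀ x, P x = c + ∑ k ∈ Finset.Icc 1 N, ∑' i, (T k i x) ^ k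

open Finset

lemma fourier_pow {A : Type*} [CommRing A] [Algebra ℂ A] (k m : ℕ) (hk : 1 ≤ k) (hm : 1 ≤ m)
    (u v : A) :
    ∑ j ∈ range (k + m),
        (Complex.exp (2 * Real.pi * Complex.I / (k + m))) ^ (j * k) •
          (u + (Complex.exp (2 * Real.pi * Complex.I / (k + m))) ^ j • v) ^ (k + m)
      = (((k + m) * (k + m).choose k : ℕ) : ℂ) • (u ^ k * v ^ m) := by
  have hcast : (2 * Real.pi * Complex.I / ((k : ℂ) + (m : ℂ))) = (2 * Real.pi * Complex.I / (((k + m : ℕ) : ℂ))) := by push_cast; ring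
  rw [show ((k:ℂ) + (m:ℂ)) = (((k + m : ℕ)) : ℂ) by push_cast; ring]
  set n := k + m with hn
  set ω := Complex.exp (2 * Real.pi * Complex.I / n) with hω
  have hn0 : (n : ℕ) ≠ 0 := by omega
  have hprim : IsPrimitiveRoot ω n := Complex.isPrimitiveRoot_exp n hn0
  have step1 : ∀ j ∈ range n,
      ω ^ (j * k) • (u + ω ^ j • v) ^ n
        = ∑ r ∈ range (n + 1), (ω ^ (k + (n - r))) ^ j • (u ^ r * v ^ (n - r) * (n.choose r : A)) := by
    intro j hj
    rw [add_pow, smul_sum]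
    refine sum_congr rfl fun r hr => ?_
    rw [smul_pow, mul_smul_comm, smul_mul_assoc, smul_smul]
    congr 1
    rw [← pow_mul, ← pow_add, ← pow_mul]
    ring_nf
  rw [sum_congr rfl step1, sum_comm]
  have step2 : ∀ r ∈ range (n+1),
      ∑ j ∈ range n, (ω ^ (k + (n - r))) ^ j • (u ^ r * v ^ (n - r) * (n.choose r : A))
        = (∑ j ∈ range n, (ω ^ (k + (n - r))) ^ j) • (u ^ r * v ^ (n - r) * (n.choose r : A)) := by
    intro r _
    rw [sum_smul]
  rw [sum_congr rfl step2, Finset.sum_eq_single k]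
  · have hnk : k + (n - k) = n := by omega
    have h1 : ω ^ (k + (n - k)) = 1 := by rw [hnk]; exact hprim.pow_eq_one
    have hm' : n - k = m := by omega
    rw [h1, hm']
    simp only [one_pow, sum_const, card_range, nsmul_eq_mul, mul_one]
    have hc : (n.choose k : A) = algebraMap ℂ A ((n.choose k : ℂ)) := by
      simp [map_natCast]
    rw [hc, ← Algebra.commutes, ← Algebra.smul_def, smul_smul]
    norm_cast
  · intro r hr hrk
    have hr' : r ≤ n := by simpa using Nat.lt_succ_iff.mp (mem_range.mp hr)
    have hζ : ω ^ (k + (n - r)) ≠ 1 := by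
      intro heq
      obtain ⟨t, ht⟩ := (hprim.pow_eq_one_iff_dvd _).mp heq
      rcases t with _ | _ | t
      · omega
      · omega
      · have h2 : n * (t + 1 + 1) = n * t + 2 * n := by ring
        have h3 : 0 ≤ n * t := Nat.zero_le _
        omega
    rw [geom_sum_eq hζ]
    have hpow : (ω ^ (k + (n - r))) ^ n = 1 := by
      rw [← pow_mul, mul_comm, pow_mul, hprim.pow_eq_one, one_pow]
    rw [hpow, sub_self, zero_div, zero_smul]
  · intro hk'
    exact absurd (mem_range.mpr (by omega)) hk'

section
variable {E A : Type*} [NormedAddCommGroup E] [NormedSpace ℂ E]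
  [NormedCommRing A] [NormedAlgebra ℂ A]

def opGenSet (E A : Type*) [NormedAddCommGroup E] [NormedSpace ℂ E]
    [NormedCommRing A] [NormedAlgebra ℂ A] : Set (E → A) :=
  {P | ∃ c : A, P = fun _ => c} ∪
  {P | ∃ k : ℕ, 1 ≤ k ∧ ∃ T : E →L[ℂ] A, P = fun x => (T x) ^ k}

def opGenF (E A : Type*) [NormedAddCommGroup E] [NormedSpace ℂ E]
    [NormedCommRing A] [NormedAlgebra ℂ A] : AddSubmonoid (E → A) :=
  AddSubmonoid.closure (opGenSet E A)

lemma const_mem_opGenF (c : A) : (fun _ : E => c) ∈ opGenF E A :=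
  AddSubmonoid.subset_closure (Or.inl ⟨c, rfl⟩)

lemma pow_mem_opGenF {k : ℕ} (hk : 1 ≤ k) (T : E →L[ℂ] A) :
    (fun x => (T x) ^ k) ∈ opGenF E A :=
  AddSubmonoid.subset_closure (Or.inr ⟨k, hk, T, rfl⟩)

lemma smul_pow_mem_opGenF (c : ℂ) {k : ℕ} (hk : 1 ≤ k) (T : E →L[ℂ] A) :
    (fun x => c • (T x) ^ k) ∈ opGenF E A := by
  obtain ⟨d, hd⟩ := IsAlgClosed.exists_pow_nat_eq c (n := k) (by omega)
  have : (fun x => c • (T x) ^ k) = fun x => ((d • T) x) ^ k := by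
    ext x
    rw [ContinuousLinearMap.smul_apply, smul_pow, hd]
  rw [this]
  exact pow_mem_opGenF hk _
end

section
variable {E A : Type*} [NormedAddCommGroup E] [NormedSpace ℂ E]
  [NormedCommRing A] [NormedAlgebra ℂ A]

lemma fourier_pow' {A : Type*} [CommRing A] [Algebra ℂ A] (k m : ℕ) (hk : 1 ≤ k) (hm : 1 ≤ m)
    (u v : A) :
    u ^ k * v ^ m = ∑ j ∈ range (k + m),
      ((((k + m) * (k + m).choose k : ℕ) : ℂ)⁻¹ *
        (Complex.exp (2 * Real.pi * Complex.I / (k + m))) ^ (j * k)) •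
          (u + (Complex.exp (2 * Real.pi * Complex.I / (k + m))) ^ j • v) ^ (k + m) := by
  have h := fourier_pow k m hk hm u v
  have hs : (((k + m) * (k + m).choose k : ℕ) : ℂ) ≠ 0 := by
    rw [Nat.cast_ne_zero]
    exact Nat.mul_ne_zero (by omega) (Nat.choose_pos (by omega)).ne'
  calc u ^ k * v ^ m
      = (((k + m) * (k + m).choose k : ℕ) : ℂ)⁻¹ •
        ((((k + m) * (k + m).choose k : ℕ) : ℂ) • (u ^ k * v ^ m)) := (inv_smul_smul₀ hs _).symm
    _ = (((k + m) * (k + m).choose k : ℕ) : ℂ)⁻¹ • ∑ j ∈ range (k + m),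
          (Complex.exp (2 * Real.pi * Complex.I / (k + m))) ^ (j * k) •
            (u + (Complex.exp (2 * Real.pi * Complex.I / (k + m))) ^ j • v) ^ (k + m) := by
        rw [h]
    _ = _ := by
        rw [smul_sum]
        exact sum_congr rfl fun j _ => smul_smul _ _ _

lemma const_mul_pow_mem_opGenF (c : A) {k : ℕ} (hk : 1 ≤ k) (T : E →L[ℂ] A) :
    (fun x => c * (T x) ^ k) ∈ opGenF E A := by
  rcases eq_or_lt_of_le hk with h1 | h2
  · have : (fun x => c * (T x) ^ k) =
        fun x => (((ContinuousLinearMap.mul ℂ A c).comp T) x) ^ 1 := by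
      ext x; simp [← h1]
    rw [this]
    exact pow_mem_opGenF le_rfl _
  · -- k ≥ 2
    have hf := fourier_pow' 1 (k - 1) le_rfl (by omega) c (1 : A)
    have hkk : 1 + (k - 1) = k := by omega
    rw [hkk] at hf
    rw [show ((1:ℕ):ℂ) + ((k-1:ℕ):ℂ) = ((k:ℕ):ℂ) by norm_cast] at hf
    simp only [pow_one] at hf
    have h1k : (1 : A) ^ (k - 1) = 1 := one_pow _
    rw [h1k, mul_one] at hf
    have key : (fun x => c * (T x) ^ k) = ∑ j ∈ range k,
        (fun x => ((((k * k.choose 1 : ℕ) : ℂ)⁻¹ *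
            (Complex.exp (2 * Real.pi * Complex.I / k)) ^ (j * 1)) •
          (((ContinuousLinearMap.mul ℂ A
            (c + (Complex.exp (2 * Real.pi * Complex.I / k)) ^ j • (1 : A))).comp T) x) ^ k)) := by
      ext x
      rw [Finset.sum_apply]
      conv_lhs => rw [hf]
      rw [Finset.sum_mul]
      refine sum_congr rfl fun j hj => ?_
      rw [smul_mul_assoc, ← mul_pow]
      rfl
    rw [key]
    exact AddSubmonoid.sum_mem _ fun j _ => smul_pow_mem_opGenF _ hk _

lemma pow_mul_pow_mem_opGenF {k m : ℕ} (hk : 1 ≤ k) (hm : 1 ≤ m)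
    (T S : E →L[ℂ] A) : (fun x => (T x) ^ k * (S x) ^ m) ∈ opGenF E A := by
  have key : (fun x => (T x) ^ k * (S x) ^ m) = ∑ j ∈ range (k + m),
      (fun x => ((((k + m) * (k + m).choose k : ℕ) : ℂ)⁻¹ *
          (Complex.exp (2 * Real.pi * Complex.I / (k + m))) ^ (j * k)) •
        ((T + (Complex.exp (2 * Real.pi * Complex.I / (k + m))) ^ j • S) x) ^ (k + m)) := by
    ext x
    rw [Finset.sum_apply]
    rw [fourier_pow' k m hk hm (T x) (S x)]
    refine sum_congr rfl fun j hj => ?_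
    have : (T + (Complex.exp (2 * Real.pi * Complex.I / (k + m))) ^ j • S) x
        = T x + (Complex.exp (2 * Real.pi * Complex.I / (k + m))) ^ j • S x := by
      simp
    rw [this]
  rw [key]
  exact AddSubmonoid.sum_mem _ fun j _ => smul_pow_mem_opGenF _ (by omega) _

lemma mul_mem_opGenF {f g : E → A} (hf : f ∈ opGenF E A) (hg : g ∈ opGenF E A) :
    f * g ∈ opGenF E A := by
  induction hf using AddSubmonoid.closure_induction with
  | mem p hp =>
    induction hg using AddSubmonoid.closure_induction with
    | mem q hq =>
      rcases hp with ⟨c, rfl⟩ | ⟨k, hk, T, rfl⟩ <;>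
        rcases hq with ⟨d, rfl⟩ | ⟨l, hl, S, rfl⟩
      · exact const_mem_opGenF (c * d)
      · exact const_mul_pow_mem_opGenF c hl S
      · have : ((fun x => (T x) ^ k) * fun _ => d) = fun x => d * (T x) ^ k := by
          ext x; simp [mul_comm]
        rw [this]
        exact const_mul_pow_mem_opGenF d hk T
      · exact pow_mul_pow_mem_opGenF hk hl T S
    | zero => simpa using (opGenF E A).zero_mem
    | add a b _ _ ha hb => rw [mul_add]; exact (opGenF E A).add_mem ha hb
  | zero => simpa using (opGenF E A).zero_mem
  | add a b _ _ ha hb => rw [add_mul]; exact (opGenF E A).add_mem ha hb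
end

section
variable {E A : Type*} [NormedAddCommGroup E] [NormedSpace ℂ E]
  [NormedCommRing A] [NormedAlgebra ℂ A] [CompleteSpace A]

lemma summable_pow_apply {T : ℕ → E →L[ℂ] A} {k : ℕ} (hk : 1 ≤ k)
    (hT : Summable fun i => ‖T i‖ ^ k) (x : E) :
    Summable fun i => (T i x) ^ k := by
  have h1 : ∀ i, ‖(T i x) ^ k‖ ≤ ‖T i‖ ^ k * ‖x‖ ^ k := fun i => by
    calc ‖(T i x) ^ k‖ ≤ ‖T i x‖ ^ k := norm_pow_le' _ (by omega)
      _ ≤ (‖T i‖ * ‖x‖) ^ k := pow_le_pow_left₀ (norm_nonneg _) ((T i).le_opNorm x) k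
      _ = ‖T i‖ ^ k * ‖x‖ ^ k := mul_pow _ _ _
  exact Summable.of_norm ((hT.mul_right _).of_nonneg_of_le (fun i => norm_nonneg _) h1)

lemma IsOpGenPoly.add' {P Q : E → A} (hP : IsOpGenPoly P) (hQ : IsOpGenPoly Q) :
    IsOpGenPoly (P + Q) := by
  obtain ⟨N₁, c₁, T₁, hs₁, he₁⟩ := hP
  obtain ⟨N₂, c₂, T₂, hs₂, he₂⟩ := hQ
  set T' : ℕ → ℕ → E →L[ℂ] A := fun k i =>
    if i % 2 = 0 then (if k ≤ N₁ then T₁ k (i / 2) else 0)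
    else (if k ≤ N₂ then T₂ k (i / 2) else 0) with hT'
  have h2e : ∀ k j, T' k (2 * j) = (if k ≤ N₁ then T₁ k j else 0) := fun k j => by
    simp [hT', Nat.mul_mod_right, Nat.mul_div_cancel_left _ two_pos]
  have h2o : ∀ k j, T' k (2 * j + 1) = (if k ≤ N₂ then T₂ k j else 0) := fun k j => by
    have : (2 * j + 1) % 2 = 1 := by omega
    have h2 : (2 * j + 1) / 2 = j := by omega
    simp [hT', this, h2]
  have hse : ∀ k, 1 ≤ k → Summable fun j => ‖(if k ≤ N₁ then T₁ k j else 0 : E →L[ℂ] A)‖ ^ k := by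
    intro k hk
    by_cases hN : k ≤ N₁
    · simpa [hN] using hs₁ k hk hN
    · simpa [hN, zero_pow (show k ≠ 0 by omega)] using summable_zero
  have hso : ∀ k, 1 ≤ k → Summable fun j => ‖(if k ≤ N₂ then T₂ k j else 0 : E →L[ℂ] A)‖ ^ k := by
    intro k hk
    by_cases hN : k ≤ N₂
    · simpa [hN] using hs₂ k hk hN
    · simpa [hN, zero_pow (show k ≠ 0 by omega)] using summable_zero
  refine ⟨max N₁ N₂, c₁ + c₂, T', ?_, ?_⟩
  · intro k hk _
    refine Summable.even_add_odd ?_ ?_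
    · have : (fun j => ‖T' k (2 * j)‖ ^ k) =
          fun j => ‖(if k ≤ N₁ then T₁ k j else 0 : E →L[ℂ] A)‖ ^ k := by
        funext j; rw [h2e]
      rw [this]; exact hse k hk
    · have : (fun j => ‖T' k (2 * j + 1)‖ ^ k) =
          fun j => ‖(if k ≤ N₂ then T₂ k j else 0 : E →L[ℂ] A)‖ ^ k := by
        funext j; rw [h2o]
      rw [this]; exact hso k hk
  · intro x
    have hsplit : ∀ k, 1 ≤ k → ∑' i, (T' k i x) ^ k
        = (∑' j, ((if k ≤ N₁ then T₁ k j else 0 : E →L[ℂ] A) x) ^ k)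
          + ∑' j, ((if k ≤ N₂ then T₂ k j else 0 : E →L[ℂ] A) x) ^ k := by
      intro k hk
      have he' : (fun j => (T' k (2 * j) x) ^ k) =
          fun j => ((if k ≤ N₁ then T₁ k j else 0 : E →L[ℂ] A) x) ^ k := by
        funext j; rw [h2e]
      have ho' : (fun j => (T' k (2 * j + 1) x) ^ k) =
          fun j => ((if k ≤ N₂ then T₂ k j else 0 : E →L[ℂ] A) x) ^ k := by
        funext j; rw [h2o]
      rw [← tsum_even_add_odd (by rw [he']; exact summable_pow_apply hk (hse k hk) x)
        (by rw [ho']; exact summable_pow_apply hk (hso k hk) x), he', ho']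
    have key : ∑ k ∈ Finset.Icc 1 (max N₁ N₂), ∑' i, (T' k i x) ^ k
        = (∑ k ∈ Finset.Icc 1 N₁, ∑' i, (T₁ k i x) ^ k)
          + ∑ k ∈ Finset.Icc 1 N₂, ∑' i, (T₂ k i x) ^ k := by
      rw [Finset.sum_congr rfl (fun k hk => hsplit k (Finset.mem_Icc.mp hk).1),
        Finset.sum_add_distrib]
      congr 1
      · rw [← Finset.sum_subset (Finset.Icc_subset_Icc_right (le_max_left N₁ N₂))
          (fun k hk hk' => ?_)]
        · refine Finset.sum_congr rfl fun k hk => ?_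
          simp [(Finset.mem_Icc.mp hk).2]
        · have : ¬ k ≤ N₁ := fun h =>
            hk' (Finset.mem_Icc.mpr ⟨(Finset.mem_Icc.mp hk).1, h⟩)
          have hk1 : 1 ≤ k := (Finset.mem_Icc.mp hk).1
          simp [this, zero_pow (show k ≠ 0 by omega)]
      · rw [← Finset.sum_subset (Finset.Icc_subset_Icc_right (le_max_right N₁ N₂))
          (fun k hk hk' => ?_)]
        · refine Finset.sum_congr rfl fun k hk => ?_
          simp [(Finset.mem_Icc.mp hk).2]
        · have : ¬ k ≤ N₂ := fun h =>
            hk' (Finset.mem_Icc.mpr ⟨(Finset.mem_Icc.mp hk).1, h⟩)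
          have hk1 : 1 ≤ k := (Finset.mem_Icc.mp hk).1
          simp [this, zero_pow (show k ≠ 0 by omega)]
    have : (P + Q) x = P x + Q x := rfl
    rw [this, he₁ x, he₂ x, key]
    ring

lemma isOpGenPoly_of_mem_opGenF {P : E → A} (hP : P ∈ opGenF E A) : IsOpGenPoly P := by
  induction hP using AddSubmonoid.closure_induction with
  | mem p hp =>
    rcases hp with ⟨c, rfl⟩ | ⟨k, hk, T, rfl⟩
    · exact ⟨0, c, fun _ _ => 0, fun k h1 h0 => absurd h0 (by omega), fun x => by simp⟩
    · refine ⟨k, 0, fun k' i => if k' = k ∧ i = 0 then T else 0, ?_, ?_⟩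
      · intro k' h1 _
        refine summable_of_ne_finset_zero (s := {0}) fun b hb => ?_
        have : b ≠ 0 := by simpa using hb
        simp [this, zero_pow (show k' ≠ 0 by omega)]
      · intro x
        have hterm : ∀ k' ∈ Finset.Icc 1 k,
            ∑' i, ((if k' = k ∧ i = 0 then T else 0) x) ^ k'
              = if k' = k then (T x) ^ k else 0 := by
          intro k' hk'
          have h1 : 1 ≤ k' := (Finset.mem_Icc.mp hk').1
          rw [tsum_eq_single 0 (fun b hb => by
            simp [hb, zero_pow (show k' ≠ 0 by omega)])]
          by_cases hkk : k' = k
          · simp [hkk]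
          · simp [hkk, zero_pow (show k' ≠ 0 by omega)]
        rw [Finset.sum_congr rfl hterm, Finset.sum_ite_eq' (Finset.Icc 1 k) k
          (fun _ => (T x) ^ k)]
        simp [hk]
  | zero => exact ⟨0, 0, fun _ _ => 0, fun k h1 h0 => absurd h0 (by omega), fun x => by simp⟩
  | add a b _ _ ha hb => exact ha.add' hb

lemma continuous_of_mem_opGenF {P : E → A} (hP : P ∈ opGenF E A) : Continuous P := by
  induction hP using AddSubmonoid.closure_induction with
  | mem p hp =>
    rcases hp with ⟨c, rfl⟩ | ⟨k, hk, T, rfl⟩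
    · exact continuous_const
    · exact T.continuous.pow k
  | zero => exact continuous_const
  | add a b _ _ ha hb => exact ha.add hb
end

section
variable {E A : Type*} [NormedAddCommGroup E] [NormedSpace ℂ E]
  [NormedCommRing A] [NormedAlgebra ℂ A] [CompleteSpace A]

lemma norm_tsum_pow_le {T : ℕ → E →L[ℂ] A} {k : ℕ} (hk : 1 ≤ k)
    (hT : Summable fun i => ‖T i‖ ^ k) {x : E} {B : ℝ} (hx : ‖x‖ ≤ B) :
    ‖∑' i, (T i x) ^ k‖ ≤ (∑' i, ‖T i‖ ^ k) * B ^ k := by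
  have hb : ∀ i, ‖(T i x) ^ k‖ ≤ ‖T i‖ ^ k * B ^ k := fun i => by
    calc ‖(T i x) ^ k‖ ≤ ‖T i x‖ ^ k := norm_pow_le' _ (by omega)
      _ ≤ (‖T i‖ * B) ^ k := pow_le_pow_left₀ (norm_nonneg _)
          (((T i).le_opNorm x).trans (mul_le_mul_of_nonneg_left hx (norm_nonneg _))) k
      _ = _ := mul_pow _ _ _
  have hs : Summable fun i => ‖(T i x) ^ k‖ :=
    (hT.mul_right _).of_nonneg_of_le (fun i => norm_nonneg _) hb
  calc ‖∑' i, (T i x) ^ k‖ ≤ ∑' i, ‖(T i x) ^ k‖ := norm_tsum_le_tsum_norm hs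
    _ ≤ ∑' i, ‖T i‖ ^ k * B ^ k := Summable.tsum_le_tsum hb hs (hT.mul_right _)
    _ = _ := tsum_mul_right
end

set_option maxHeartbeats 1000000 in
open Filter Topology in
/-- The uniform closure `𝑷(K,A)` on a compact set `K` of the restrictions of
polynomials generated by linear operators is closed under multiplication. -/
theorem opGenPoly_closure_mul
    (E A : Type*) [NormedAddCommGroup E] [NormedSpace ℂ E]
    [NormedCommRing A] [NormedAlgebra ℂ A] [CompleteSpace A] [NormOneClass A]
    (K : Set E) (hK : IsCompact K) (f g : C(K, A))
    (hf : f ∈ closure {h : C(K, A) | ∃ P : E → A, IsOpGenPoly P ∧ ∀ x : K, h x = P x})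
    (hg : g ∈ closure {h : C(K, A) | ∃ P : E → A, IsOpGenPoly P ∧ ∀ x : K, h x = P x}) :
    f * g ∈ closure {h : C(K, A) | ∃ P : E → A, IsOpGenPoly P ∧ ∀ x : K, h x = P x} := by
  haveI : CompactSpace K := isCompact_iff_compactSpace.mp hK
  set S : Set C(K, A) := {h : C(K, A) | ∃ P : E → A, IsOpGenPoly P ∧ ∀ x : K, h x = P x}
    with hSdef
  let SF : Set C(K, A) := {h : C(K, A) | ∃ P ∈ opGenF E A, ∀ x : K, h x = P x}
  -- K is bounded
  obtain ⟨B₀, hB₀⟩ := hK.isBounded.subset_closedBall 0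
  set B := max B₀ 1 with hB
  have hBpos : (0 : ℝ) < B := lt_of_lt_of_le one_pos (le_max_right _ _)
  have hxB : ∀ x : K, ‖(x : E)‖ ≤ B := fun x => by
    have h1 := hB₀ x.2
    rw [Metric.mem_closedBall, dist_zero_right] at h1
    exact h1.trans (le_max_left _ _)
  have hSF_S : SF ⊆ S := by
    rintro h ⟨P, hPF, hr⟩
    exact ⟨P, isOpGenPoly_of_mem_opGenF hPF, hr⟩
  have hS_clSF : S ⊆ closure SF := by
    rintro h ⟨P, ⟨N, c, T, hsum, heval⟩, hr⟩
    have hcont : ∀ M : ℕ, Continuous fun x : E =>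
        c + ∑ k ∈ Finset.Icc 1 N, ∑ i ∈ Finset.range M, (T k i x) ^ k := fun M =>
      continuous_const.add (continuous_finset_sum _ fun k _ =>
        continuous_finset_sum _ fun i _ => ((T k i).continuous.pow k))
    let hM : ℕ → C(K, A) := fun M =>
      ⟨fun x => c + ∑ k ∈ Finset.Icc 1 N, ∑ i ∈ Finset.range M, (T k i (x : E)) ^ k,
        (hcont M).comp continuous_subtype_val⟩
    have hmem : ∀ M, hM M ∈ SF := by
      intro M
      refine ⟨fun x : E => c + ∑ k ∈ Finset.Icc 1 N, ∑ i ∈ Finset.range M, (T k i x) ^ k,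
        ?_, fun x => rfl⟩
      have heq : (fun x : E => c + ∑ k ∈ Finset.Icc 1 N, ∑ i ∈ Finset.range M, (T k i x) ^ k)
          = (fun _ : E => c) +
            ∑ k ∈ Finset.Icc 1 N, ∑ i ∈ Finset.range M, (fun x => (T k i x) ^ k) := by
        funext x
        simp [Finset.sum_apply]
      rw [heq]
      exact (opGenF E A).add_mem (const_mem_opGenF c)
        (AddSubmonoid.sum_mem _ fun k hk => AddSubmonoid.sum_mem _ fun i _ =>
          pow_mem_opGenF (Finset.mem_Icc.mp hk).1 _)
    have heps0 : Tendsto (fun M => ∑ k ∈ Finset.Icc 1 N,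
        (∑' i, ‖T k (i + M)‖ ^ k) * B ^ k) atTop (𝓝 0) := by
      have hterm : ∀ k ∈ Finset.Icc 1 N,
          Tendsto (fun M => (∑' i, ‖T k (i + M)‖ ^ k) * B ^ k) atTop (𝓝 0) := by
        intro k hk
        simpa using (tendsto_sum_nat_add fun i => ‖T k i‖ ^ k).mul_const (B ^ k)
      simpa using tendsto_finset_sum (Finset.Icc 1 N) hterm
    have hdist : ∀ M, dist (hM M) h ≤ ∑ k ∈ Finset.Icc 1 N,
        (∑' i, ‖T k (i + M)‖ ^ k) * B ^ k := by
      intro M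
      have hepsnn : (0 : ℝ) ≤ ∑ k ∈ Finset.Icc 1 N,
          (∑' i, ‖T k (i + M)‖ ^ k) * B ^ k := by
        refine Finset.sum_nonneg fun k _ => mul_nonneg
          (tsum_nonneg fun i => pow_nonneg (norm_nonneg _) _)
          (pow_nonneg hBpos.le _)
      rw [ContinuousMap.dist_le hepsnn]
      intro x
      have hsummk : ∀ k, 1 ≤ k → k ≤ N → Summable fun i => (T k i (x : E)) ^ k :=
        fun k h1 h2 => summable_pow_apply h1 (hsum k h1 h2) (x : E)
      have hdiff : P (x : E) - hM M x
          = ∑ k ∈ Finset.Icc 1 N, ∑' i, (T k (i + M) (x : E)) ^ k := by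
        have h0 : P (x : E) - hM M x = ∑ k ∈ Finset.Icc 1 N,
            ((∑' i, (T k i (x : E)) ^ k) - ∑ i ∈ Finset.range M, (T k i (x : E)) ^ k) := by
          rw [heval (x : E)]
          show c + _ - (c + _) = _
          rw [Finset.sum_sub_distrib]
          abel
        rw [h0]
        refine Finset.sum_congr rfl fun k hk => ?_
        obtain ⟨h1, h2⟩ := Finset.mem_Icc.mp hk
        have := Summable.sum_add_tsum_nat_add M (hsummk k h1 h2)
        rw [← this]
        abel
      calc dist (hM M x) (h x) = ‖P (x : E) - hM M x‖ := by
            rw [dist_eq_norm', hr x]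
        _ = ‖∑ k ∈ Finset.Icc 1 N, ∑' i, (T k (i + M) (x : E)) ^ k‖ := by rw [hdiff]
        _ ≤ ∑ k ∈ Finset.Icc 1 N, ‖∑' i, (T k (i + M) (x : E)) ^ k‖ := norm_sum_le _ _
        _ ≤ ∑ k ∈ Finset.Icc 1 N, (∑' i, ‖T k (i + M)‖ ^ k) * B ^ k := by
            refine Finset.sum_le_sum fun k hk => ?_
            obtain ⟨h1, h2⟩ := Finset.mem_Icc.mp hk
            exact norm_tsum_pow_le h1
              ((summable_nat_add_iff M).mpr (hsum k h1 h2)) (hxB x)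
    have htend : Tendsto hM atTop (𝓝 h) := by
      rw [tendsto_iff_dist_tendsto_zero]
      exact squeeze_zero (fun M => dist_nonneg) hdist heps0
    exact mem_closure_of_tendsto htend (Eventually.of_forall hmem)
  have hSFmul : ∀ a ∈ SF, ∀ b ∈ SF, a * b ∈ SF := by
    rintro a ⟨P, hPF, hra⟩ b ⟨Q, hQF, hrb⟩
    refine ⟨P * Q, mul_mem_opGenF hPF hQF, fun x => ?_⟩
    show a x * b x = P (x : E) * Q (x : E)
    rw [hra x, hrb x]
  have h1 : closure S ⊆ closure SF := closure_minimal hS_clSF isClosed_closure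
  obtain ⟨u, hu, hulim⟩ := mem_closure_iff_seq_limit.mp (h1 hf)
  obtain ⟨v, hv, hvlim⟩ := mem_closure_iff_seq_limit.mp (h1 hg)
  have hmul : Tendsto (fun n => u n * v n) atTop (𝓝 (f * g)) := hulim.mul hvlim
  have hfg : f * g ∈ closure SF :=
    mem_closure_of_tendsto hmul (Eventually.of_forall fun n => hSFmul _ (hu n) _ (hv n))
  exact closure_mono hSF_S hfg
end

section
/- Let E be a Banach space, A a commutative unital Banach algebra, K ⊆ E compact, f ∈ 𝑷(K,A), and φ ∈ 𝔐(A) a character of A. Then φ ∘ f ∈ 𝑷(K,A) (identifying scalar-valued functions with A-valued ones via multiplication by the unit); i.e., 𝑷(K,A) is admissible. -/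
/-- `𝑷(K,A)` is admissible: if `f ∈ 𝑷(K,A)` and `φ` is a character of `A`, then
the `A`-valued function `x ↦ φ(f(x)) • 1` belongs to `𝑷(K,A)`. -/
theorem opGenPoly_closure_admissible
    (E A : Type*) [NormedAddCommGroup E] [NormedSpace ℂ E]
    [NormedCommRing A] [NormedAlgebra ℂ A] [CompleteSpace A] [NormOneClass A]
    (K : Set E) (hK : IsCompact K) (f : C(K, A))
    (hf : f ∈ closure {h : C(K, A) | ∃ P : E → A, IsOpGenPoly P ∧ ∀ x : K, h x = P x})
    (φ : A →L[ℂ] ℂ) (hφ0 : φ ≠ 0) (hφm : ∀ a b : A, φ (a * b) = φ a * φ b) :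
    (⟨fun x => φ (f x) • (1 : A),
        ((φ.continuous.comp f.continuous).smul continuous_const)⟩ : C(K, A)) ∈
      closure {h : C(K, A) | ∃ P : E → A, IsOpGenPoly P ∧ ∀ x : K, h x = P x} := by
  -- φ 1 = 1
  have h2 : φ 1 * φ 1 = φ 1 := by rw [← hφm, one_mul]
  have hφ1 : φ 1 = 1 := by
    have h3 : φ 1 * (φ 1 - 1) = 0 := by rw [mul_sub, mul_one, h2, sub_self]
    rcases mul_eq_zero.mp h3 with h | h
    · exfalso; apply hφ0; ext a
      have ha : φ a = φ a * φ 1 := by rw [← hφm, mul_one]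
      rw [ContinuousLinearMap.zero_apply, ha, h, mul_zero]
    · exact sub_eq_zero.mp h
  set ψ : A →+* ℂ :=
    { toFun := φ, map_one' := hφ1, map_mul' := hφm,
      map_zero' := map_zero φ, map_add' := map_add φ } with hψ
  -- the post-composition map
  set L : C(A, A) := ⟨fun a => φ a • (1 : A),
    (φ.continuous.smul continuous_const)⟩ with hL
  have hmaps : Set.MapsTo (fun g : C(K, A) => L.comp g)
      {h : C(K, A) | ∃ P : E → A, IsOpGenPoly P ∧ ∀ x : K, h x = P x}
      {h : C(K, A) | ∃ P : E → A, IsOpGenPoly P ∧ ∀ x : K, h x = P x} := by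
    rintro h ⟨P, ⟨N, c, T, hsum, hrep⟩, hhx⟩
    refine ⟨fun x => φ (P x) • 1, ⟨N, φ c • 1,
      fun k i => (φ.comp (T k i)).smulRight 1, ?_, ?_⟩, ?_⟩
    · intro k hk1 hkN
      refine Summable.of_nonneg_of_le (fun i => by positivity)
        (fun i => ?_) (((hsum k hk1 hkN).mul_left (‖φ‖ ^ k)))
      have h1 : ‖((φ.comp (T k i)).smulRight (1 : A))‖ ≤ ‖φ‖ * ‖T k i‖ := by
        rw [ContinuousLinearMap.norm_smulRight_apply, norm_one, mul_one]
        exact φ.opNorm_comp_le (T k i)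
      calc ‖((φ.comp (T k i)).smulRight (1 : A))‖ ^ k
          ≤ (‖φ‖ * ‖T k i‖) ^ k := by
            exact pow_le_pow_left₀ (norm_nonneg _) h1 k
        _ = ‖φ‖ ^ k * ‖T k i‖ ^ k := mul_pow _ _ _
    · intro x
      have hsx : ∀ k ∈ Finset.Icc 1 N, Summable fun i => (T k i x) ^ k := by
        intro k hk
        rw [Finset.mem_Icc] at hk
        refine Summable.of_norm (Summable.of_nonneg_of_le (fun i => norm_nonneg _)
          (fun i => ?_) (((hsum k hk.1 hk.2).mul_right (‖x‖ ^ k))))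
        calc ‖(T k i x) ^ k‖ ≤ ‖T k i x‖ ^ k := norm_pow_le' _ hk.1
          _ ≤ (‖T k i‖ * ‖x‖) ^ k := pow_le_pow_left₀ (norm_nonneg _)
              ((T k i).le_opNorm x) k
          _ = ‖T k i‖ ^ k * ‖x‖ ^ k := mul_pow _ _ _
      show φ (P x) • (1:A) = _
      rw [hrep x, map_add, map_sum]
      rw [add_smul, Finset.sum_smul]
      congr 1
      refine Finset.sum_congr rfl fun k hk => ?_
      have hφt : φ (∑' i, (T k i x) ^ k) = ∑' i, (φ ((T k i x) ^ k)) :=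
        φ.map_tsum (hsx k hk)
      have hsφ : Summable fun i => φ ((T k i x) ^ k) :=
        (hsx k hk).map (φ : A →L[ℂ] ℂ) φ.continuous
      rw [hφt, ← hsφ.tsum_smul_const]
      refine tsum_congr fun i => ?_
      have : φ ((T k i x) ^ k) = (φ (T k i x)) ^ k := map_pow ψ _ k
      rw [this]
      simp [smul_pow]
    · intro x
      simp only [ContinuousMap.comp_apply, hL, ContinuousMap.coe_mk, hhx x]
  have hmem := map_mem_closure (ContinuousMap.continuous_postcomp L) hf hmaps
  have heq : (⟨fun x => φ (f x) • (1 : A),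
      ((φ.continuous.comp f.continuous).smul continuous_const)⟩ : C(K, A)) = L.comp f := by
    ext x; rfl
  rw [heq]; exact hmem
end

section
/- Let S be a nonempty set, 1 < p < ∞, and A = ℓ^p(S) with pointwise multiplication. Every character (nonzero continuous multiplicative linear functional) φ : A → ℂ is an evaluation: there exists s₀ ∈ S such that φ(f) = f(s₀) for all f ∈ A. Conversely, each evaluation f ↦ f(s) is a character. -/
open scoped ENNReal

/-- Characters of `ℓ^p(S)` (`1 < p < ∞`, pointwise multiplication) are exactly the
point evaluations: every nonzero continuous linear functional that is multiplicative
with respect to the pointwise product is evaluation at some `s₀ ∈ S`, and conversely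
every point evaluation is such a character. -/
theorem lp_characters_are_evaluations
    (S : Type*) [Nonempty S] (p : ℝ≥0∞) (hp : 1 < p) (hp' : p ≠ ⊤) [Fact (1 ≤ p)] :
    (∀ φ : lp (fun _ : S => ℂ) p →L[ℂ] ℂ, φ ≠ 0 →
      (∀ (f g : lp (fun _ : S => ℂ) p) (h : Memℓp (fun s => f s * g s) p),
        φ (⟨fun s => f s * g s, h⟩ : lp (fun _ : S => ℂ) p) = φ f * φ g) →
      ∃ s₀ : S, ∀ f : lp (fun _ : S => ℂ) p, φ f = f s₀) ∧
    (∀ s₀ : S, ∃ φ : lp (fun _ : S => ℂ) p →L[ℂ] ℂ, φ ≠ 0 ∧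
      (∀ (f g : lp (fun _ : S => ℂ) p) (h : Memℓp (fun s => f s * g s) p),
        φ (⟨fun s => f s * g s, h⟩ : lp (fun _ : S => ℂ) p) = φ f * φ g) ∧
      ∀ f : lp (fun _ : S => ℂ) p, φ f = f s₀) := by
  classical
  have hp0 : p ≠ 0 := by positivity
  set e : S → lp (fun _ : S => ℂ) p := fun s => lp.single p s 1 with he
  have he_app : ∀ s t : S, (e s) t = if t = s then 1 else 0 := by
    intro s t
    by_cases h : t = s
    · subst h; simp [he, lp.single_apply_self]
    · simp [he, lp.single_apply_ne p s _ h, h]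
  -- single as smul
  have hsingle_smul : ∀ (s : S) (a : ℂ), lp.single p s a = a • e s := by
    intro s a
    apply lp.ext
    funext t
    by_cases h : t = s
    · subst h
      simp [lp.single_apply_self, he_app, lp.coeFn_smul]
    · simp [lp.single_apply_ne p s _ h, he_app, h, lp.coeFn_smul]
  constructor
  · intro φ hφ hmul
    -- φ(e s) ∈ {0, 1}
    have hmem : ∀ s : S, Memℓp (fun t => (e s) t * (e s) t) p := by
      intro s
      have : (fun t => (e s) t * (e s) t) = ((e s : ∀ _, ℂ)) := by
        funext t
        by_cases h : t = s <;> simp [he_app, h]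
      rw [this]; exact (e s).2
    have hidem : ∀ s : S, φ (e s) = φ (e s) * φ (e s) := by
      intro s
      have := hmul (e s) (e s) (hmem s)
      rw [← this]
      congr 1
      apply lp.ext
      funext t
      by_cases h : t = s <;> simp [he_app, h]
    have horth : ∀ s t : S, s ≠ t → φ (e s) * φ (e t) = 0 := by
      intro s t hst
      have hm : Memℓp (fun u => (e s) u * (e t) u) p := by
        have : (fun u => (e s) u * (e t) u) = fun _ => (0 : ℂ) := by
          funext u
          by_cases h : u = s
          · subst h; simp [he_app, hst, Ne.symm hst]
          · simp [he_app, h]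
        rw [this]; exact zero_memℓp
      have := hmul (e s) (e t) hm
      rw [← this]
      have h0 : (⟨fun u => (e s) u * (e t) u, hm⟩ : lp (fun _ : S => ℂ) p) = 0 := by
        apply lp.ext
        funext u
        by_cases h : u = s
        · subst h; simp [he_app, hst, Ne.symm hst]
        · simp [he_app, h]
      rw [h0, map_zero]
    -- value of φ as a sum
    have hsum : ∀ f : lp (fun _ : S => ℂ) p,
        HasSum (fun s => f s * φ (e s)) (φ f) := by
      intro f
      have h1 := (lp.hasSum_single hp' f).mapL φ
      convert h1 using 2 with s
      rw [hsingle_smul s (f s), map_smul, smul_eq_mul]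
    by_cases hex : ∃ s₀ : S, φ (e s₀) ≠ 0
    · obtain ⟨s₀, hs₀⟩ := hex
      have hone : φ (e s₀) = 1 := by
        have h := (hidem s₀).symm
        have : φ (e s₀) * (φ (e s₀) - 1) = 0 := by ring_nf; linear_combination h
        rcases mul_eq_zero.mp this with h1 | h1
        · exact absurd h1 hs₀
        · exact sub_eq_zero.mp h1
      have hzero : ∀ t : S, t ≠ s₀ → φ (e t) = 0 := by
        intro t ht
        have := horth s₀ t (Ne.symm ht)
        rw [hone, one_mul] at this
        exact this
      refine ⟨s₀, fun f => ?_⟩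
      have h2 : HasSum (fun s => f s * φ (e s)) (f s₀) := by
        have : (fun s => f s * φ (e s)) = fun s => if s = s₀ then f s₀ else 0 := by
          funext s
          by_cases h : s = s₀
          · subst h; rw [hone, mul_one, if_pos rfl]
          · rw [hzero s h, mul_zero, if_neg h]
        rw [this]
        exact hasSum_ite_eq s₀ (f s₀)
      exact (hsum f).unique h2
    · exfalso
      push_neg at hex
      apply hφ
      ext f
      have h2 : HasSum (fun s => f s * φ (e s)) 0 := by
        have : (fun s => f s * φ (e s)) = fun _ => (0 : ℂ) := by
          funext s; rw [hex s, mul_zero]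
        rw [this]; exact hasSum_zero
      simpa using (hsum f).unique h2
  · intro s₀
    refine ⟨LinearMap.mkContinuous
      { toFun := fun f => f s₀
        map_add' := fun f g => by simp [lp.coeFn_add]
        map_smul' := fun c f => by simp [lp.coeFn_smul] } 1
      (fun f => by rw [one_mul]; exact lp.norm_apply_le_norm hp0 f s₀), ?_, ?_, ?_⟩
    · intro h
      have h1 : (e s₀ : lp (fun _ : S => ℂ) p) s₀ = 0 := by
        have := congrFun (congrArg DFunLike.coe h) (e s₀)
        exact this
      rw [he_app] at h1
      simp at h1
    · intro f g h
      rfl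
    · intro f
      rfl
end

section
/- Let E be a complex Banach space, K ⊆ E compact, and φ : 𝒫_N(K) → ℂ a character of the uniform algebra 𝒫_N(K). If the restriction of φ to E* (viewed inside 𝒫_N(K) as 1-homogeneous polynomials) is represented by evaluation at some a ∈ E (i.e., φ(ψ) = ψ(a) for all ψ ∈ E*), then for every n-homogeneous nuclear polynomial P = Σ_i ψ_i^n (with Σ‖ψ_i‖^n < ∞) one has φ(P) = P(a), and consequently |P(a)| ≤ ‖P‖_K, i.e., a lies in the nuclear polynomially convex hull of K. -/
/-!
On `PN` the character `φ` is additive, multiplicative and bounded by the sup norm on `K`.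
Multiplicativity and the representation on `E*` give `φ (ψ ^ k) = ψ(a) ^ k`, and additivity
extends this to the partial sums `∑_{i<m} ψᵢ ^ n`. Since `K` is bounded, these partial sums
converge to `h` uniformly on `K`, with error at most `(∑_{i≥m} ‖ψᵢ‖ ^ n) · sup_K ‖x‖ ^ n`,
so `φ h` is the limit of `∑_{i<m} ψᵢ(a) ^ n`. Every function involved is a (truncated or shifted)
nuclear series, hence lies in `PN`.
-/

/-- `P : E → ℂ` is (an affine combination of) nuclear polynomials. -/
def IsNuclearPoly {E : Type*} [NormedAddCommGroup E] [NormedSpace ℂ E]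
    (P : E → ℂ) : Prop :=
  ∃ (N : ℕ) (c : ℂ) (ψ : ℕ → ℕ → E →L[ℂ] ℂ),
    (∀ k, 1 ≤ k → k ≤ N → Summable fun i => ‖ψ k i‖ ^ k) ∧
    ∀ x, P x = c + ∑ k ∈ Finset.Icc 1 N, ∑' i, (ψ k i x) ^ k

open Filter Topology Finset

section PowerSeriesOfFunctionals

variable {𝕜 E : Type*} [NontriviallyNormedField 𝕜] [NormedAddCommGroup E] [NormedSpace 𝕜 E]
  {ψ : ℕ → E →L[𝕜] 𝕜} {n : ℕ}

lemma norm_apply_pow_le (φ : E →L[𝕜] 𝕜) (n : ℕ) (x : E) : ‖φ x ^ n‖ ≤ ‖φ‖ ^ n * ‖x‖ ^ n := by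
  rw [norm_pow, ← mul_pow]
  exact pow_le_pow_left₀ (norm_nonneg _) (φ.le_opNorm x) n

lemma summable_norm_apply_pow (hψ : Summable fun i => ‖ψ i‖ ^ n) (x : E) :
    Summable fun i => ‖ψ i x ^ n‖ :=
  .of_nonneg_of_le (fun _ => norm_nonneg _) (fun i => norm_apply_pow_le (ψ i) n x)
    (hψ.mul_right _)

lemma norm_tsum_apply_pow_le (hψ : Summable fun i => ‖ψ i‖ ^ n) (x : E) :
    ‖∑' i, ψ i x ^ n‖ ≤ (∑' i, ‖ψ i‖ ^ n) * ‖x‖ ^ n :=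
  calc ‖∑' i, ψ i x ^ n‖ ≤ ∑' i, ‖ψ i x ^ n‖ :=
        norm_tsum_le_tsum_norm (summable_norm_apply_pow hψ x)
    _ ≤ ∑' i, ‖ψ i‖ ^ n * ‖x‖ ^ n :=
      (summable_norm_apply_pow hψ x).tsum_le_tsum (fun i => norm_apply_pow_le (ψ i) n x)
        (hψ.mul_right _)
    _ = (∑' i, ‖ψ i‖ ^ n) * ‖x‖ ^ n := tsum_mul_right

lemma norm_tsum_apply_pow_sub_sum_range_le [CompleteSpace 𝕜]
    (hψ : Summable fun i => ‖ψ i‖ ^ n) (x : E) (m : ℕ) :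
    ‖∑' i, ψ i x ^ n - ∑ i ∈ range m, ψ i x ^ n‖ ≤ (∑' i, ‖ψ (i + m)‖ ^ n) * ‖x‖ ^ n := by
  rw [← (summable_norm_apply_pow hψ x).of_norm.sum_add_tsum_nat_add m, add_sub_cancel_left]
  exact norm_tsum_apply_pow_le ((summable_nat_add_iff m).mpr hψ) x

end PowerSeriesOfFunctionals

section NuclearPolynomials

variable {E : Type*} [NormedAddCommGroup E] [NormedSpace ℂ E] {ψ : ℕ → E →L[ℂ] ℂ} {n : ℕ}

lemma isNuclearPoly_tsum_pow (hn : 1 ≤ n) (hψ : Summable fun i => ‖ψ i‖ ^ n) :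
    IsNuclearPoly fun x => ∑' i, ψ i x ^ n := by
  refine ⟨n, 0, fun k => if k = n then ψ else 0, fun k hk _ => ?_, fun x => ?_⟩
  · dsimp only
    split_ifs with hkn
    · exact hkn ▸ hψ
    · simp [zero_pow (by omega : k ≠ 0)]
  · rw [zero_add, sum_eq_single_of_mem n (mem_Icc.mpr ⟨hn, le_rfl⟩) fun k hk hkn => ?_]
    · simp
    · simp [hkn, zero_pow (by grind : k ≠ 0)]

lemma isNuclearPoly_sum_range_pow (hn : 1 ≤ n) (ψ : ℕ → E →L[ℂ] ℂ) (m : ℕ) :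
    IsNuclearPoly fun x => ∑ i ∈ range m, ψ i x ^ n := by
  set χ : ℕ → E →L[ℂ] ℂ := fun i => if i < m then ψ i else 0
  have hχ : ∀ i ∉ range m, χ i = 0 := fun i hi => if_neg (by simpa using hi)
  have hpow : ∀ x, ∑' i, χ i x ^ n = ∑ i ∈ range m, ψ i x ^ n := fun x => by
    rw [tsum_eq_sum fun i hi => by simp [hχ i hi, zero_pow (by omega : n ≠ 0)]]
    exact sum_congr rfl fun i hi => by simp [χ, mem_range.mp hi]
  have hχsum : Summable fun i => ‖χ i‖ ^ n :=
    summable_of_ne_finset_zero (s := range m) fun i hi => by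
      simp [hχ i hi, zero_pow (by omega : n ≠ 0)]
  simpa only [hpow] using isNuclearPoly_tsum_pow hn hχsum

lemma isNuclearPoly_pow {k : ℕ} (hk : 1 ≤ k) (φ : E →L[ℂ] ℂ) :
    IsNuclearPoly fun x => φ x ^ k := by
  simpa using isNuclearPoly_sum_range_pow hk (fun _ => φ) 1

end NuclearPolynomials

section PartialHomomorphisms

variable {M R : Type*} {S : Set M} {φ : M → R}

lemma map_pow_of_mul_mem [Monoid M] [Monoid R]
    (hmul : ∀ f g, f ∈ S → g ∈ S → φ (f * g) = φ f * φ g) {f : M}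
    (hS : ∀ k, 1 ≤ k → f ^ k ∈ S) {k : ℕ} (hk : 1 ≤ k) : φ (f ^ k) = φ f ^ k := by
  induction k, hk using Nat.le_induction with
  | base => rw [pow_one, pow_one]
  | succ k hk ih =>
    rw [pow_succ, hmul _ _ (hS k hk) (by simpa using hS 1 le_rfl), ih, pow_succ]

lemma map_sum_range_of_add_mem [AddCommMonoid M] [AddCommGroup R]
    (hadd : ∀ f g, f ∈ S → g ∈ S → φ (f + g) = φ f + φ g) {f : ℕ → M}
    (hf : ∀ i, f i ∈ S) (hsum : ∀ m, ∑ i ∈ range m, f i ∈ S) (m : ℕ) :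
    φ (∑ i ∈ range m, f i) = ∑ i ∈ range m, φ (f i) := by
  induction m with
  | zero =>
    have h0 : (0 : M) ∈ S := by simpa using hsum 0
    simpa using hadd 0 0 h0 h0
  | succ m ih => rw [sum_range_succ, hadd _ _ (hsum m) (hf m), ih, sum_range_succ]

lemma map_sub_of_add_mem [AddGroup M] [AddGroup R]
    (hadd : ∀ f g, f ∈ S → g ∈ S → φ (f + g) = φ f + φ g) {f g : M}
    (hfg : f - g ∈ S) (hg : g ∈ S) : φ (f - g) = φ f - φ g :=
  eq_sub_of_add_eq (by simpa using (hadd _ _ hfg hg).symm)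

end PartialHomomorphisms

lemma tendsto_of_uniform_approx {X : Type*} [TopologicalSpace X] {S : Set C(X, ℂ)}
    {φ : C(X, ℂ) → ℂ} (hadd : ∀ f g, f ∈ S → g ∈ S → φ (f + g) = φ f + φ g)
    (hbd : ∀ f ∈ S, ‖φ f‖ ≤ ⨆ x, ‖f x‖) {h : C(X, ℂ)} {H : ℕ → C(X, ℂ)} {ε : ℕ → ℝ}
    (hH : ∀ m, H m ∈ S) (hsub : ∀ m, h - H m ∈ S) (hε0 : ∀ m, 0 ≤ ε m)
    (hε : Tendsto ε atTop (𝓝 0)) (hle : ∀ m x, ‖h x - H m x‖ ≤ ε m) :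
    Tendsto (fun m => φ (H m)) atTop (𝓝 (φ h)) := by
  rw [tendsto_iff_norm_sub_tendsto_zero]
  refine squeeze_zero (fun _ => norm_nonneg _) (fun m => ?_) hε
  calc ‖φ (H m) - φ h‖ = ‖φ (h - H m)‖ := by
        rw [norm_sub_rev, map_sub_of_add_mem hadd (hsub m) (hH m)]
    _ ≤ ⨆ x, ‖(h - H m) x‖ := hbd _ (hsub m)
    _ ≤ ε m := Real.iSup_le (fun x => hle m x) (hε0 m)

theorem character_of_nuclear_algebra_eval_general
    (E : Type*) [NormedAddCommGroup E] [NormedSpace ℂ E]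
    (K : Set E) (hK : IsCompact K)
    (PN : Set C(K, ℂ))
    (hPN : PN = closure {h : C(K, ℂ) | ∃ P : E → ℂ, IsNuclearPoly P ∧ ∀ x : K, h x = P x})
    (φ : C(K, ℂ) → ℂ)
    (hadd : ∀ f g, f ∈ PN → g ∈ PN → φ (f + g) = φ f + φ g)
    (hmul : ∀ f g, f ∈ PN → g ∈ PN → φ (f * g) = φ f * φ g)
    (hbd : ∀ f ∈ PN, ‖φ f‖ ≤ ⨆ x : K, ‖f x‖)
    (a : E)
    (hrep : ∀ (ψ : E →L[ℂ] ℂ) (h : C(K, ℂ)), (∀ x : K, h x = ψ x) → φ h = ψ a) :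
    ∀ (n : ℕ), 1 ≤ n → ∀ ψ : ℕ → E →L[ℂ] ℂ, (Summable fun i => ‖ψ i‖ ^ n) →
      ∀ h : C(K, ℂ), (∀ x : K, h x = ∑' i, (ψ i x) ^ n) →
        φ h = ∑' i, (ψ i a) ^ n ∧
          ‖∑' i, (ψ i a) ^ n‖ ≤ ⨆ x : K, ‖h x‖ := by
  intro n hn ψ hψ h hh
  have hPN_mem {f : C(K, ℂ)} {P : E → ℂ} (hP : IsNuclearPoly P) (hf : ∀ x : K, f x = P x) :
      f ∈ PN := hPN ▸ subset_closure ⟨P, hP, hf⟩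
  set g : ℕ → C(K, ℂ) := fun i => (ψ i : C(E, ℂ)).restrict K
  set H : ℕ → C(K, ℂ) := fun m => ∑ i ∈ range m, g i ^ n
  have hH_apply (m : ℕ) (x : K) : H m x = ∑ i ∈ range m, ψ i x ^ n := by simp [H, g]
  have hg_pow (i k : ℕ) (hk : 1 ≤ k) : g i ^ k ∈ PN :=
    hPN_mem (isNuclearPoly_pow hk (ψ i)) fun x => by simp [g]
  have hH (m : ℕ) : H m ∈ PN := hPN_mem (isNuclearPoly_sum_range_pow hn ψ m) (hH_apply m)
  have hφH (m : ℕ) : φ (H m) = ∑ i ∈ range m, ψ i a ^ n := by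
    rw [map_sum_range_of_add_mem hadd (fun i => hg_pow i n hn) hH]
    refine sum_congr rfl fun i _ => ?_
    rw [map_pow_of_mul_mem hmul (hg_pow i) hn, hrep (ψ i) (g i) fun _ => rfl]
  have hsub (m : ℕ) : h - H m ∈ PN := by
    refine hPN_mem (isNuclearPoly_tsum_pow hn ((summable_nat_add_iff m).mpr hψ)) fun x => ?_
    rw [ContinuousMap.sub_apply, hh, hH_apply, sub_eq_iff_eq_add',
      ((summable_norm_apply_pow hψ x.1).of_norm.sum_add_tsum_nat_add m)]
  obtain ⟨C, hC0, hC⟩ := hK.isBounded.exists_pos_norm_le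
  have hlim : Tendsto (fun m => φ (H m)) atTop (𝓝 (φ h)) := by
    refine tendsto_of_uniform_approx hadd hbd hH hsub
      (ε := fun m => (∑' i, ‖ψ (i + m)‖ ^ n) * C ^ n) (fun m => by positivity)
      (by simpa using (tendsto_sum_nat_add fun i => ‖ψ i‖ ^ n).mul_const (C ^ n)) fun m x => ?_
    rw [hh, hH_apply]
    exact (norm_tsum_apply_pow_sub_sum_range_le hψ x.1 m).trans (by gcongr; exact hC _ x.2)
  have heq : φ h = ∑' i, ψ i a ^ n := by
    simp only [hφH] at hlim
    exact tendsto_nhds_unique hlim (summable_norm_apply_pow hψ a).of_norm.hasSum.tendsto_sum_nat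
  exact ⟨heq, heq ▸ hbd h (hPN_mem (isNuclearPoly_tsum_pow hn hψ) hh)⟩

/-- A character `φ` of `𝒫_N(K)` whose restriction to `E*` is represented by
evaluation at `a ∈ E` satisfies `φ(P) = P(a)` for every `n`-homogeneous nuclear
polynomial `P = ∑ᵢ ψᵢⁿ`, and consequently `|P(a)| ≤ ‖P‖_K`, i.e. `a ∈ K̂_N`. -/
theorem character_of_nuclear_algebra_eval
    (E : Type*) [NormedAddCommGroup E] [NormedSpace ℂ E] [CompleteSpace E]
    (K : Set E) (hK : IsCompact K) (hKne : K.Nonempty)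
    (PN : Set C(K, ℂ))
    (hPN : PN = closure {h : C(K, ℂ) | ∃ P : E → ℂ, IsNuclearPoly P ∧ ∀ x : K, h x = P x})
    (φ : C(K, ℂ) → ℂ)
    (hadd : ∀ f g, f ∈ PN → g ∈ PN → φ (f + g) = φ f + φ g)
    (hsmul : ∀ (c : ℂ) f, f ∈ PN → φ (c • f) = c * φ f)
    (hmul : ∀ f g, f ∈ PN → g ∈ PN → φ (f * g) = φ f * φ g)
    (hne : ∃ f ∈ PN, φ f ≠ 0)
    (hbd : ∀ f ∈ PN, ‖φ f‖ ≤ ⨆ x : K, ‖f x‖)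
    (a : E)
    (hrep : ∀ (ψ : E →L[ℂ] ℂ) (h : C(K, ℂ)), (∀ x : K, h x = ψ x) → φ h = ψ a) :
    ∀ (n : ℕ), 1 ≤ n → ∀ ψ : ℕ → E →L[ℂ] ℂ, (Summable fun i => ‖ψ i‖ ^ n) →
      ∀ h : C(K, ℂ), (∀ x : K, h x = ∑' i, (ψ i x) ^ n) →
        φ h = ∑' i, (ψ i a) ^ n ∧
          ‖∑' i, (ψ i a) ^ n‖ ≤ ⨆ x : K, ‖h x‖ :=
  character_of_nuclear_algebra_eval_general E K hK PN hPN φ hadd hmul hbd a hrep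
end

section
/- Let A be a Banach algebra whose set of characters 𝔐(A) spans a subspace dense in A* for the topology of uniform convergence on compact subsets of A. Let K be a compact subset of a Banach space E and f : K → A continuous such that φ ∘ f belongs to a closed subspace 𝔄 ⊆ C(K) for every φ ∈ 𝔐(A). Then φ ∘ f ∈ 𝔄 for every φ ∈ A*. -/
/-- If the span of the characters of `A` is dense in `A*` for the topology of
uniform convergence on compact subsets of `A`, and `f : K → A` is continuous with
`φ ∘ f ∈ 𝔄` (a closed subspace of `C(K)`) for every character `φ`, then
`φ ∘ f ∈ 𝔄` for every `φ ∈ A*`. -/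
theorem comp_mem_of_characters_generate
    (E A : Type*) [NormedAddCommGroup E] [NormedSpace ℂ E]
    [NormedCommRing A] [NormedAlgebra ℂ A] [CompleteSpace A]
    (hdense : ∀ (φ : A →L[ℂ] ℂ) (C : Set A), IsCompact C → ∀ ε > (0 : ℝ),
      ∃ φ' ∈ Submodule.span ℂ
          {χ : A →L[ℂ] ℂ | χ ≠ 0 ∧ ∀ a b : A, χ (a * b) = χ a * χ b},
        ∀ a ∈ C, ‖φ a - φ' a‖ ≤ ε)
    (K : Set E) (hK : IsCompact K)
    (𝔄 : Submodule ℂ C(K, ℂ)) (h𝔄 : IsClosed (𝔄 : Set C(K, ℂ)))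
    (f : C(K, A))
    (hf : ∀ χ : A →L[ℂ] ℂ, χ ≠ 0 → (∀ a b : A, χ (a * b) = χ a * χ b) →
      (⟨fun x => χ (f x), χ.continuous.comp f.continuous⟩ : C(K, ℂ)) ∈ 𝔄) :
    ∀ φ : A →L[ℂ] ℂ,
      (⟨fun x => φ (f x), φ.continuous.comp f.continuous⟩ : C(K, ℂ)) ∈ 𝔄 := by
  intro φ
  haveI : CompactSpace K := isCompact_iff_compactSpace.mp hK
  -- the linear map ψ ↦ ψ ∘ f
  set T : (A →L[ℂ] ℂ) →ₗ[ℂ] C(K, ℂ) :=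
    { toFun := fun ψ => ⟨fun x => ψ (f x), ψ.continuous.comp f.continuous⟩
      map_add' := by intro ψ χ; ext x; simp
      map_smul' := by intro c ψ; ext x; simp }
  have hspan : ∀ ψ ∈ Submodule.span ℂ
      {χ : A →L[ℂ] ℂ | χ ≠ 0 ∧ ∀ a b : A, χ (a * b) = χ a * χ b}, T ψ ∈ 𝔄 := by
    intro ψ hψ
    have : Submodule.span ℂ
        {χ : A →L[ℂ] ℂ | χ ≠ 0 ∧ ∀ a b : A, χ (a * b) = χ a * χ b} ≤ 𝔄.comap T := by
      rw [Submodule.span_le]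
      intro χ hχ
      exact hf χ hχ.1 hχ.2
    exact this hψ
  have hcl : T φ ∈ closure (𝔄 : Set C(K, ℂ)) := by
    rw [Metric.mem_closure_iff]
    intro ε hε
    obtain ⟨φ', hφ', hb⟩ := hdense φ ((fun x => f x) '' Set.univ)
      (CompactSpace.isCompact_univ.image f.continuous) (ε / 2) (by linarith)
    refine ⟨T φ', hspan φ' hφ', lt_of_le_of_lt ?_ (half_lt_self hε)⟩
    rw [ContinuousMap.dist_le (by linarith)]
    intro x
    rw [dist_eq_norm]
    exact hb (f x) ⟨x, trivial, rfl⟩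
  exact h𝔄.closure_subset hcl
end
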